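/- Define inductively polynomials p_n^k(t) = Σ_{l=1}^{n+2} a_{n,l}·d(k-l+1, t), where a_{n,1} = a_{n,2} = p_{n-1}^k(0) and a_{n,l} = a_{n,l-1} - a_{n-1,l-2} for 3 ≤ l ≤ n+2 (with p₀^k(t) = d(k,t) + d(k-1,t)). Then for all suitable n ≥ 0, k, and t ≥ 1: p_{n+1}^k(0)·c(k+1,t) - p_{n+1}^k(t) = p_{n+2}^k(t-1). -/
import Mathlib


mutual
  /-- The function `c_k(t)` from Section 4 of the paper:
  `c(2,0) = 1`, `c(2,t) = 0` for `t ≠ 0`, and `c(k,t) = d(k-1,t-1) + c(k-1,t)`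
  for `k ≥ 3` (with value `0` for `k < 2`). -/
  def cFun : ℕ → ℤ → ℤ
    | 0, _ => 0
    | 1, _ => 0
    | 2, t => if t = 0 then 1 else 0
    | (k + 3), t => dFun (k + 2) (t - 1) + cFun (k + 2) t

  /-- The function `d_k(t)` from Section 4 of the paper:
  `d(2,0) = 1`, `d(2,t) = 0` for `t ≠ 0`, and `d(k,t) = c(k-1,t)` for `k ≥ 3`
  (with value `0` for `k < 2`). -/
  def dFun : ℕ → ℤ → ℤ
    | 0, _ => 0
    | 1, _ => 0
    | 2, t => if t = 0 then 1 else 0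
    | (k + 3), t => cFun (k + 2) t
end

/-- The coefficients `a_{n,l}` from Section 4 (for a fixed `k`):
`a_{0,1} = a_{0,2} = 1`, `a_{n,1} = a_{n,2} = p_{n-1}^k(0)`, and
`a_{n,l} = a_{n,l-1} - a_{n-1,l-2}` for `3 ≤ l ≤ n+2` (and `0` otherwise). -/
def aCoef (k : ℕ) : ℕ → ℕ → ℤ
  | 0, l => if l = 1 ∨ l = 2 then 1 else 0
  | n + 1, l =>
    if l = 1 ∨ l = 2 then
      ∑ j ∈ Finset.Icc 1 (n + 2), aCoef k n j * dFun (k - j + 1) 0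
    else if 3 ≤ l ∧ l ≤ n + 3 then aCoef k (n + 1) (l - 1) - aCoef k n (l - 2)
    else 0
  termination_by n l => (n, l)
  decreasing_by
  · exact Prod.Lex.left _ _ (Nat.lt_succ_self n)
  · exact Prod.Lex.right _ (by omega)
  · exact Prod.Lex.left _ _ (Nat.lt_succ_self n)

/-- The polynomial `p_n^k(t) = Σ_{l=1}^{n+2} a_{n,l}·d(k-l+1, t)`. -/
def pPoly (k n : ℕ) (t : ℤ) : ℤ :=
  ∑ l ∈ Finset.Icc 1 (n + 2), aCoef k n l * dFun (k - l + 1) t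
lemma cd_neg : ∀ m : ℕ, ∀ t : ℤ, t < 0 → cFun m t = 0 ∧ dFun m t = 0 := by
  intro m
  induction m using Nat.strong_induction_on with
  | _ m ih =>
    match m with
    | 0 => intro t ht; exact ⟨rfl, rfl⟩
    | 1 => intro t ht; exact ⟨rfl, rfl⟩
    | 2 => intro t ht; constructor <;> simp [cFun, dFun] <;> omega
    | (m+3) =>
      intro t ht
      have h1 := ih (m+2) (by omega) t ht
      have h2 := ih (m+2) (by omega) (t-1) (by omega)
      refine ⟨?_, ?_⟩
      · rw [cFun]; rw [h1.1, h2.2]; ring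
      · rw [dFun]; exact h1.1

lemma cd_zero : ∀ m : ℕ, cFun (m+2) 0 = 1 ∧ dFun (m+2) 0 = 1 := by
  intro m
  induction m with
  | zero => simp [cFun, dFun]
  | succ m ih =>
    have hneg := (cd_neg (m+2) (0-1) (by norm_num)).2
    refine ⟨?_, ?_⟩
    · rw [show m+1+2 = m+3 from rfl, cFun, hneg, ih.1]; ring
    · rw [show m+1+2 = m+3 from rfl, dFun, ih.1]

lemma dFun_rec (m : ℕ) (s : ℤ) : dFun (m+4) s = dFun (m+3) s + dFun (m+2) (s-1) := by
  rw [show m+4 = (m+1)+3 from rfl, dFun, cFun, dFun]; ring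

lemma dFun_succ (m : ℕ) (s : ℤ) : dFun (m+3) s = cFun (m+2) s := by rw [dFun]

lemma cFun_eq (m : ℕ) (s : ℤ) :
    cFun (m+4) s = dFun (m+3) s + dFun (m+3) (s-1) + dFun (m+2) (s-1) := by
  rw [show m+4 = (m+1)+3 from rfl, cFun, cFun, dFun_succ m s]; ring
lemma aCoef_one (k n : ℕ) : aCoef k (n+1) 1 = pPoly k n 0 := by
  rw [aCoef, pPoly]; norm_num

lemma aCoef_two (k n : ℕ) : aCoef k (n+1) 2 = pPoly k n 0 := by
  rw [aCoef, pPoly]; norm_num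

lemma aCoef_rec (k n l : ℕ) (h3 : 3 ≤ l) (hl : l ≤ n + 3) :
    aCoef k (n+1) l = aCoef k (n+1) (l-1) - aCoef k n (l-2) := by
  rw [aCoef, if_neg (by omega), if_pos ⟨h3, hl⟩]

lemma pPoly_zero (k n : ℕ) (hk : n + 3 ≤ k) :
    pPoly k n 0 = ∑ l ∈ Finset.Icc 1 (n+2), aCoef k n l := by
  rw [pPoly]
  refine Finset.sum_congr rfl fun l hl => ?_
  simp only [Finset.mem_Icc] at hl
  obtain ⟨m, hm⟩ : ∃ m, k - l + 1 = m + 2 := ⟨k - l - 1, by omega⟩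
  rw [hm, (cd_zero m).2, mul_one]

lemma aCoef_telescope (k n : ℕ) : ∀ l, 2 ≤ l → l ≤ n + 3 →
    aCoef k (n+1) l = pPoly k n 0 - ∑ j ∈ Finset.Icc 1 (l-2), aCoef k n j := by
  intro l
  induction l with
  | zero => omega
  | succ l ih =>
    intro h2 hl
    rcases Nat.lt_or_ge l 2 with h | h
    · have : l = 1 := by omega
      subst this
      simp [aCoef_two]
    · rw [aCoef_rec k n (l+1) (by omega) hl]
      have e1 : l + 1 - 1 = l := by omega
      have e2 : l + 1 - 2 = (l - 2) + 1 := by omega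
      rw [e1, e2, ih h (by omega), Finset.sum_Icc_succ_top (by omega : 1 ≤ l - 2 + 1)]
      have e3 : l - 2 + 1 = l - 1 := by omega
      rw [e3]
      ring

lemma aCoef_top (k n : ℕ) (hk : n + 5 ≤ k) :
    aCoef k (n+2) (n+4) = aCoef k (n+1) (n+3) := by
  have h1 := aCoef_telescope k (n+1) (n+4) (by omega) (by omega)
  rw [pPoly_zero k (n+1) (by omega)] at h1
  have e : n + 4 - 2 = n + 2 := by omega
  rw [e] at h1
  rw [h1, show n+1+2 = n+3 from rfl, Finset.sum_Icc_succ_top (by omega : 1 ≤ n+3)]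
  ring

lemma abel_sum (f g : ℕ → ℤ) : ∀ m : ℕ,
    ∑ j ∈ Finset.Icc 1 (m+1), f (j+2) * (g j - g (j+1))
      = f 3 * g 1 - f (m+3) * g (m+2)
        + ∑ j ∈ Finset.Icc 2 (m+1), (f (j+2) - f (j+1)) * g j := by
  intro m
  induction m with
  | zero => simp; ring
  | succ m ih =>
    rw [Finset.sum_Icc_succ_top (by omega : 1 ≤ m+1+1), ih,
      Finset.sum_Icc_succ_top (by omega : 2 ≤ m+1+1)]
    ring

lemma Icc_split (m : ℕ) : Finset.Icc 1 (m+3) = insert 1 (insert 2 (Finset.Icc 3 (m+3))) := by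
  ext x; simp; omega

lemma reindex (F : ℕ → ℤ) : ∀ m : ℕ,
    ∑ l ∈ Finset.Icc 3 (m+4), F l = ∑ j ∈ Finset.Icc 1 (m+2), F (j+2) := by
  intro m
  induction m with
  | zero => simp [Finset.sum_Icc_succ_top, show (3:ℕ) ≤ 4 from by omega]
  | succ m ih =>
    rw [Finset.sum_Icc_succ_top (by omega : 3 ≤ m+4+1), ih,
      Finset.sum_Icc_succ_top (by omega : 1 ≤ m+2+1)]
/-- The key recursion in the inductive step of Proposition 4.4:
`p_{n+1}^k(0)·c(k+1,t) - p_{n+1}^k(t) = p_{n+2}^k(t-1)` for `t ≥ 1` and `k`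
large enough that all indices `k-l+1` appearing are `≥ 2`. -/
theorem pPoly_identity (k n : ℕ) (hk : n + 5 ≤ k) (t : ℤ) (ht : 1 ≤ t) :
    pPoly k (n + 1) 0 * cFun (k + 1) t - pPoly k (n + 1) t =
      pPoly k (n + 2) (t - 1) := by
  have hDrec : ∀ j ∈ Finset.Icc 1 (n+2),
      aCoef k (n+2) (j+2) * dFun (k-(j+2)+1) (t-1)
        = aCoef k (n+2) (j+2) * (dFun (k-j+1) t - dFun (k-(j+1)+1) t) := by
    intro j hj
    simp only [Finset.mem_Icc] at hj
    obtain ⟨m, hm⟩ : ∃ m, k - j = m + 3 := ⟨k - j - 3, by omega⟩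
    have e1 : k - (j+2) + 1 = m + 2 := by omega
    have e2 : k - j + 1 = m + 4 := by omega
    have e3 : k - (j+1) + 1 = m + 3 := by omega
    rw [e1, e2, e3, dFun_rec]; ring
  have h3 : ∑ l ∈ Finset.Icc 3 (n+4), aCoef k (n+2) l * dFun (k-l+1) (t-1)
      = ∑ j ∈ Finset.Icc 1 (n+2),
          aCoef k (n+2) (j+2) * (dFun (k-j+1) t - dFun (k-(j+1)+1) t) := by
    rw [reindex (fun l => aCoef k (n+2) l * dFun (k-l+1) (t-1)) n]
    exact Finset.sum_congr rfl hDrec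
  have hR : pPoly k (n+2) (t-1)
      = aCoef k (n+2) 1 * dFun (k-1+1) (t-1) + aCoef k (n+2) 2 * dFun (k-2+1) (t-1)
        + ∑ j ∈ Finset.Icc 1 (n+2),
            aCoef k (n+2) (j+2) * (dFun (k-j+1) t - dFun (k-(j+1)+1) t) := by
    rw [pPoly, show n+2+2 = (n+1)+3 from rfl, Icc_split (n+1),
      Finset.sum_insert (by simp), Finset.sum_insert (by simp)]
    rw [show (n+1)+3 = n+4 from rfl, h3]
    ring
  have habel : ∑ j ∈ Finset.Icc 1 (n+2),
        aCoef k (n+2) (j+2) * (dFun (k-j+1) t - dFun (k-(j+1)+1) t)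
      = aCoef k (n+2) 3 * dFun (k-1+1) t
        - aCoef k (n+2) (n+4) * dFun (k-(n+3)+1) t
        + ∑ j ∈ Finset.Icc 2 (n+2),
            (aCoef k (n+2) (j+2) - aCoef k (n+2) (j+1)) * dFun (k-j+1) t :=
    abel_sum (aCoef k (n+2)) (fun j => dFun (k-j+1) t) (n+1)
  have hmid : ∀ j ∈ Finset.Icc 2 (n+2),
      (aCoef k (n+2) (j+2) - aCoef k (n+2) (j+1)) * dFun (k-j+1) t
        = -(aCoef k (n+1) j * dFun (k-j+1) t) := by
    intro j hj
    simp only [Finset.mem_Icc] at hj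
    have hrec : aCoef k (n+2) (j+2) = aCoef k (n+2) (j+1) - aCoef k (n+1) j :=
      aCoef_rec k (n+1) (j+2) (by omega) (by omega)
    rw [hrec]; ring
  have hInsert2 : Finset.Icc 1 (n+2) = insert 1 (Finset.Icc 2 (n+2)) := by
    ext x; simp; omega
  have hL : pPoly k (n+1) t = aCoef k (n+1) 1 * dFun (k-1+1) t
      + (∑ j ∈ Finset.Icc 2 (n+2), aCoef k (n+1) j * dFun (k-j+1) t)
      + aCoef k (n+1) (n+3) * dFun (k-(n+3)+1) t := by
    rw [pPoly, show n+1+2 = n+3 from rfl, Finset.sum_Icc_succ_top (by omega : 1 ≤ n+3),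
      hInsert2, Finset.sum_insert (by simp)]
  have hc : cFun (k+1) t = dFun (k-1+1) t + dFun (k-1+1) (t-1) + dFun (k-2+1) (t-1) := by
    obtain ⟨m, hm⟩ : ∃ m, k = m + 4 := ⟨k - 4, by omega⟩
    subst hm
    have e1 : m+4-1+1 = m+4 := by omega
    have e2 : m+4-2+1 = m+3 := by omega
    rw [e1, e2, show m+4+1 = (m+1)+4 from rfl, cFun_eq (m+1) t]
  have hA1 : aCoef k (n+2) 1 = pPoly k (n+1) 0 := aCoef_one k (n+1)
  have hA2 : aCoef k (n+2) 2 = pPoly k (n+1) 0 := aCoef_two k (n+1)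
  have hA3 : aCoef k (n+2) 3 = pPoly k (n+1) 0 - aCoef k (n+1) 1 := by
    have hrec : aCoef k (n+2) 3 = aCoef k (n+2) 2 - aCoef k (n+1) 1 :=
      aCoef_rec k (n+1) 3 le_rfl (by omega)
    rw [hrec, hA2]
  rw [hc, hL, hR, habel, Finset.sum_congr rfl hmid, hA1, hA2, hA3, aCoef_top k n hk]
  rw [Finset.sum_neg_distrib]
  ring
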